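/- arXiv:0802.0118 — 6 statements merged into one kernel-verified Lean document; each statement's English description precedes it below -/
import Mathlib

section
/- For a group G, the following are equivalent: (a) G is residually finite and for every group extension 1 → N → E → G → 1 with N finitely generated, the image of N is topologically embedded in E; (b) for every group extension 1 → N → E → G → 1 with N finitely generated and residually finite, E is residually finite; (c) for every group extension 1 → F → E → G → 1 with F finite, E is residually finite. -/
/-- A group `G` is residually finite if every nontrivial element avoids some
finite-index normal subgroup. -/
def ResiduallyFinite (G : Type*) [Group G] : Prop :=
  ∀ g : G, g ≠ 1 → ∃ N : Subgroup G, N.Normal ∧ N.FiniteIndex ∧ g ∉ N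

/-- A subgroup `H` of `G` is topologically embedded if for every subgroup `K ≤ H` of
finite index in `H` there is a finite-index subgroup `L` of `G` with `L ⊓ H ≤ K`. -/
def TopologicallyEmbedded {G : Type*} [Group G] (H : Subgroup G) : Prop :=
  ∀ K : Subgroup G, K ≤ H → (K.subgroupOf H).FiniteIndex →
    ∃ L : Subgroup G, L.FiniteIndex ∧ L ⊓ H ≤ K

open Function

universe u

theorem residuallyFinite_iff_group_residuallyFinite {G : Type*} [Group G] :
    ResiduallyFinite G ↔ Group.ResiduallyFinite G := by
  rw [Group.residuallyFinite_iff_exists_finiteIndex]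
  refine forall₂_congr fun g _ ↦ ⟨fun ⟨N, _, hN, hg⟩ ↦ ⟨N, hN, hg⟩, fun ⟨H, _, hg⟩ ↦ ?_⟩
  exact ⟨H.normalCore, H.normalCore_normal, inferInstance, fun h ↦ hg (H.normalCore_le h)⟩

instance Subgroup.finiteIndex_comap {G Q : Type*} [Group G] [Group Q] (f : G →* Q)
    (L : Subgroup Q) [L.FiniteIndex] : (L.comap f).FiniteIndex :=
  ⟨by rw [Subgroup.index_comap]; exact Subgroup.FiniteIndex.index_ne_zero⟩

theorem Group.finite_monoidHom_of_fg (H P : Type*) [Group H] [Group P] [Group.FG H] [Finite P] :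
    Finite (H →* P) := by
  obtain ⟨S, hS, hSfin⟩ := Group.fg_iff.mp ‹Group.FG H›
  have := hSfin.to_subtype
  refine Finite.of_injective (fun f : H →* P ↦ fun s : S ↦ f s) fun f g hfg ↦ ?_
  exact MonoidHom.eq_of_eqOn_dense hS fun s hs ↦ congrFun hfg ⟨s, hs⟩

/-- The intersection of the kernels of all homomorphisms to `Perm (Fin J.index)` is
characteristic, has finite index because there are finitely many such homomorphisms, and lies
in `J` because it lies in the kernel of the action on `H ⧸ J`. -/
theorem Group.FG.exists_characteristic_finiteIndex_le {H : Type*} [Group H] [Group.FG H]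
    (J : Subgroup H) [J.FiniteIndex] :
    ∃ C : Subgroup H, C.Characteristic ∧ C.FiniteIndex ∧ C ≤ J := by
  have := Group.finite_monoidHom_of_fg H (Equiv.Perm (Fin J.index))
  refine ⟨⨅ f : H →* Equiv.Perm (Fin J.index), f.ker, ?_,
    Subgroup.finiteIndex_iInf fun _ ↦ inferInstance, ?_⟩
  · refine Subgroup.characteristic_iff_le_comap.mpr fun σ x hx ↦ ?_
    rw [Subgroup.mem_comap, Subgroup.mem_iInf]
    exact fun f ↦ Subgroup.mem_iInf.mp hx (f.comp σ.toMonoidHom)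
  · let e : H ⧸ J ≃ Fin J.index := Finite.equivFinOfCardEq J.index_eq_card.symm
    refine (iInf_le _ (e.permCongrHom.toMonoidHom.comp (MulAction.toPermHom H (H ⧸ J)))).trans ?_
    rw [MonoidHom.ker_comp_of_injective _ _ e.permCongrHom.injective, ← Subgroup.normalCore_eq_ker]
    exact J.normalCore_le

theorem Group.ResiduallyFinite.exists_finiteIndex_inf_eq_bot {Q : Type*} [Group Q]
    [Group.ResiduallyFinite Q] (F : Subgroup Q) [Finite F] :
    ∃ L : Subgroup Q, L.FiniteIndex ∧ L ⊓ F = ⊥ := by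
  have avoid (x : {x : F // x ≠ 1}) : ∃ L : Subgroup Q, L.FiniteIndex ∧ (x : Q) ∉ L :=
    Group.residuallyFinite_iff_exists_finiteIndex.mp ‹_› _ (by simpa using x.2)
  choose L hL hxL using avoid
  refine ⟨⨅ x, L x, Subgroup.finiteIndex_iInf hL, eq_bot_iff.mpr fun y ⟨hyL, hyF⟩ ↦ ?_⟩
  by_contra hy
  exact hxL ⟨⟨y, hyF⟩, by simpa using hy⟩ (Subgroup.mem_iInf.mp hyL _)

theorem Subgroup.finite_map_mk' {E : Type*} [Group E] (H C : Subgroup E) [C.Normal]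
    [(C.subgroupOf H).FiniteIndex] : Finite (H.map (QuotientGroup.mk' C)) := by
  let f := (QuotientGroup.mk' C).comp H.subtype
  have hker : f.ker = C.subgroupOf H := by
    rw [← MonoidHom.comap_ker, QuotientGroup.ker_mk']
    rfl
  have : Finite (H ⧸ f.ker) := hker ▸ inferInstance
  rw [← H.range_subtype, ← MonoidHom.range_comp]
  exact Finite.of_equiv _ (QuotientGroup.quotientKerEquivRange f).toEquiv

-- For a class `P` of groups, the `P`-by-`G` groups are the groups `E` in extensions
-- `1 → N → E → G → 1` with `N` in `P`.

def FiniteByResiduallyFinite (G : Type u) [Group G] : Prop :=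
  ∀ (F E : Type u) [Group F] [Group E], Finite F →
    ∀ (ι : F →* E) (π : E →* G),
      Injective ι → Surjective π → π.ker = ι.range → ResiduallyFinite E

def FGResiduallyFiniteByResiduallyFinite (G : Type u) [Group G] : Prop :=
  ∀ (N E : Type u) [Group N] [Group E] (ι : N →* E) (π : E →* G),
    Injective ι → Surjective π → π.ker = ι.range → Group.FG N →
      ResiduallyFinite N → ResiduallyFinite E

def FGKernelsTopologicallyEmbedded (G : Type u) [Group G] : Prop :=
  ∀ (N E : Type u) [Group N] [Group E] (ι : N →* E) (π : E →* G),
    Injective ι → Surjective π → π.ker = ι.range → Group.FG N →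
      TopologicallyEmbedded ι.range

namespace FiniteByResiduallyFinite

variable {G : Type u} [Group G] (hc : FiniteByResiduallyFinite G)
include hc

theorem of_finite_ker {E : Type u} [Group E] {π : E →* G} (hπ : Surjective π) [Finite π.ker] :
    Group.ResiduallyFinite E :=
  residuallyFinite_iff_group_residuallyFinite.mp <|
    hc π.ker E inferInstance π.ker.subtype π π.ker.subtype_injective hπ π.ker.range_subtype.symm

theorem residuallyFinite : ResiduallyFinite G := by
  have : Finite (MonoidHom.id G).ker := by rw [MonoidHom.ker_id]; infer_instance
  exact residuallyFinite_iff_group_residuallyFinite.mpr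
    (hc.of_finite_ker (π := MonoidHom.id G) surjective_id)

theorem quotient {E : Type u} [Group E] {π : E →* G} (hπ : Surjective π) (C : Subgroup E)
    [C.Normal] (hC : C ≤ π.ker) [(C.subgroupOf π.ker).FiniteIndex] :
    Group.ResiduallyFinite (E ⧸ C) := by
  have : Finite (QuotientGroup.lift C π hC).ker := by
    rw [QuotientGroup.ker_lift]
    exact π.ker.finite_map_mk' C
  exact hc.of_finite_ker (QuotientGroup.lift_surjective_of_surjective _ _ hπ hC)

/-- Shrink `K` to a subgroup `D` that is normal in `E` and of finite index in `π.ker`;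
`π.ker ⧸ D` is a finite subgroup of the residually finite group `E ⧸ D`, so some finite-index
subgroup of `E ⧸ D` meets it trivially, and its preimage is the required subgroup. -/
theorem topologicallyEmbedded_ker {E : Type u} [Group E] {π : E →* G} (hπ : Surjective π)
    [Group.FG π.ker] : TopologicallyEmbedded π.ker := by
  intro K hK _
  obtain ⟨C, _, hCfi, hCK⟩ :=
    Group.FG.exists_characteristic_finiteIndex_le (K.subgroupOf π.ker)
  set D := C.map π.ker.subtype
  have : (D.subgroupOf π.ker).FiniteIndex := by
    rwa [show D.subgroupOf π.ker = C from
      Subgroup.comap_map_eq_self_of_injective π.ker.subtype_injective C]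
  have hDK : D ≤ K := (Subgroup.map_mono hCK).trans (Subgroup.map_subgroupOf_eq_of_le hK).le
  have := hc.quotient hπ D (Subgroup.map_subtype_le C)
  have := π.ker.finite_map_mk' D
  obtain ⟨L, _, hL⟩ :=
    Group.ResiduallyFinite.exists_finiteIndex_inf_eq_bot (π.ker.map (QuotientGroup.mk' D))
  refine ⟨L.comap (QuotientGroup.mk' D), inferInstance, fun x ⟨hxL, hxH⟩ ↦ hDK ?_⟩
  have hx : QuotientGroup.mk' D x ∈ L ⊓ π.ker.map (QuotientGroup.mk' D) :=
    ⟨hxL, Subgroup.mem_map_of_mem _ hxH⟩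
  rwa [hL, Subgroup.mem_bot, ← MonoidHom.mem_ker, QuotientGroup.ker_mk'] at hx

theorem fgKernelsTopologicallyEmbedded : FGKernelsTopologicallyEmbedded G := by
  intro N E _ _ ι π _ hπ hker _
  have : Group.FG π.ker := hker ▸ Group.fg_range ι
  exact hker ▸ hc.topologicallyEmbedded_ker hπ

end FiniteByResiduallyFinite

theorem FGResiduallyFiniteByResiduallyFinite.finiteByResiduallyFinite {G : Type u} [Group G]
    (hb : FGResiduallyFiniteByResiduallyFinite G) : FiniteByResiduallyFinite G :=
  fun F E _ _ _ ι π hι hπ hker ↦ hb F E ι π hι hπ hker inferInstance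
    (residuallyFinite_iff_group_residuallyFinite.mpr inferInstance)

/-- An element of `ι.range` is separated inside `ι.range` by residual finiteness of `N`, and then
in `E` by topological embedding; an element outside `ι.range` is separated in `G`. -/
theorem FGKernelsTopologicallyEmbedded.fgResiduallyFiniteByResiduallyFinite {G : Type u}
    [Group G] (hte : FGKernelsTopologicallyEmbedded G) (hG : ResiduallyFinite G) :
    FGResiduallyFiniteByResiduallyFinite G := by
  intro N E _ _ ι π hι hπ hker hfg hN
  simp only [residuallyFinite_iff_group_residuallyFinite,
    Group.residuallyFinite_iff_exists_finiteIndex] at hG hN ⊢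
  intro e he
  by_cases hπe : π e = 1
  · obtain ⟨n, rfl⟩ : e ∈ ι.range := hker ▸ hπe
    obtain ⟨M, _, hnM⟩ := hN n (by rintro rfl; exact he (map_one ι))
    have : ((M.map ι).subgroupOf ι.range).FiniteIndex :=
      ⟨by rw [← Subgroup.relIndex, ← Subgroup.index_comap,
        Subgroup.comap_map_eq_self_of_injective hι]; exact Subgroup.FiniteIndex.index_ne_zero⟩
    obtain ⟨L, hL, hLM⟩ := hte N E ι π hι hπ hker hfg (M.map ι) (M.map_le_range ι) this
    exact ⟨L, hL, fun heL ↦ hnM ((Subgroup.mem_map_iff_mem hι).mp (hLM ⟨heL, n, rfl⟩))⟩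
  · obtain ⟨M, _, hM⟩ := hG (π e) hπe
    exact ⟨M.comap π, inferInstance, hM⟩

/-- The following are equivalent for a group `G`:
(a) `G` is residually finite and for every extension `1 → N → E → G → 1` with `N`
finitely generated, the image of `N` is topologically embedded in `E`;
(b) for every extension `1 → N → E → G → 1` with `N` finitely generated and residually
finite, `E` is residually finite;
(c) for every extension `1 → F → E → G → 1` with `F` finite, `E` is residually finite. -/
theorem statement0 (G : Type u) [Group G] :
    ((ResiduallyFinite G ∧
        ∀ (N E : Type u) [Group N] [Group E] (ι : N →* E) (π : E →* G),
          Function.Injective ι → Function.Surjective π → π.ker = ι.range → Group.FG N →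
            TopologicallyEmbedded ι.range) ↔
      (∀ (N E : Type u) [Group N] [Group E] (ι : N →* E) (π : E →* G),
          Function.Injective ι → Function.Surjective π → π.ker = ι.range → Group.FG N →
            ResiduallyFinite N → ResiduallyFinite E)) ∧
    ((∀ (N E : Type u) [Group N] [Group E] (ι : N →* E) (π : E →* G),
          Function.Injective ι → Function.Surjective π → π.ker = ι.range → Group.FG N →
            ResiduallyFinite N → ResiduallyFinite E) ↔
      (∀ (F E : Type u) [Group F] [Group E], Finite F →
          ∀ (ι : F →* E) (π : E →* G),
            Function.Injective ι → Function.Surjective π → π.ker = ι.range →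
              ResiduallyFinite E)) := by
  have hab : ResiduallyFinite G ∧ FGKernelsTopologicallyEmbedded G →
      FGResiduallyFiniteByResiduallyFinite G :=
    fun ⟨hG, hte⟩ ↦ hte.fgResiduallyFiniteByResiduallyFinite hG
  have hbc : FGResiduallyFiniteByResiduallyFinite G → FiniteByResiduallyFinite G :=
    FGResiduallyFiniteByResiduallyFinite.finiteByResiduallyFinite
  have hca : FiniteByResiduallyFinite G →
      ResiduallyFinite G ∧ FGKernelsTopologicallyEmbedded G :=
    fun hc ↦ ⟨hc.residuallyFinite, hc.fgKernelsTopologicallyEmbedded⟩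
  exact ⟨⟨hab, hca ∘ hbc⟩, ⟨hbc, hab ∘ hca⟩⟩
end

section
/- Let G₁ and G₂ be groups with a common subgroup H. Assume that for each pair {N₁, N₂} with Nᵢ a finite-index normal subgroup of Gᵢ (i = 1,2), there exists a pair {P₁, P₂} such that Pᵢ is a finite-index normal subgroup of Gᵢ, Pᵢ ≤ Nᵢ, and P₁ ∩ H = P₂ ∩ H. Then G₁ and G₂ are each topologically embedded in the amalgamated free product G₁ ∗_H G₂. -/
/-- `H` is topologically embedded in `G` via the (injective) homomorphism `f`:
for every finite-index subgroup `K` of `H` there is a finite-index subgroup `L` of `G`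
whose preimage under `f` is contained in `K`. -/
def TopologicallyEmbeddedVia {H G : Type*} [Group H] [Group G] (f : H →* G) : Prop :=
  ∀ K : Subgroup H, K.FiniteIndex → ∃ L : Subgroup G, L.FiniteIndex ∧ L.comap f ≤ K

/-- The amalgamated free product `G₁ ∗_H G₂` of `G₁` and `G₂` over a common subgroup `H`
(given by homomorphisms `f₁ : H →* G₁`, `f₂ : H →* G₂`): the quotient of the free
product `G₁ ∗ G₂` by the normal closure of the elements `f₁(h) · f₂(h)⁻¹`. -/
abbrev AmalgamatedProduct {H G₁ G₂ : Type*} [Group H] [Group G₁] [Group G₂]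
    (f₁ : H →* G₁) (f₂ : H →* G₂) : Type _ :=
  (Monoid.Coprod G₁ G₂) ⧸ Subgroup.normalClosure
    (Set.range fun h : H => Monoid.Coprod.inl (f₁ h) * (Monoid.Coprod.inr (f₂ h))⁻¹)

/-- The canonical homomorphism `G₁ →* G₁ ∗_H G₂`. -/
def AmalgamatedProduct.inl {H G₁ G₂ : Type*} [Group H] [Group G₁] [Group G₂]
    (f₁ : H →* G₁) (f₂ : H →* G₂) : G₁ →* AmalgamatedProduct f₁ f₂ :=
  (QuotientGroup.mk' _).comp Monoid.Coprod.inl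

/-- The canonical homomorphism `G₂ →* G₁ ∗_H G₂`. -/
def AmalgamatedProduct.inr {H G₁ G₂ : Type*} [Group H] [Group G₁] [Group G₂]
    (f₁ : H →* G₁) (f₂ : H →* G₂) : G₂ →* AmalgamatedProduct f₁ f₂ :=
  (QuotientGroup.mk' _).comp Monoid.Coprod.inr

/-!
Finite-index normal subgroups `P₁ ⊴ G₁`, `P₂ ⊴ G₂` with `P₁ ∩ H = P₂ ∩ H` give finite quotients
`Gᵢ ⧸ Pᵢ` containing a common copy of `M = H ⧸ (P₁ ∩ H)`. Two finite groups `A`, `B` amalgamated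
over a common subgroup `M` embed compatibly into a finite symmetric group: `A × (B ⧸ M)` and
`B × (A ⧸ M)` are both free right `M`-sets with `|A : M| · |B : M|` orbits, so they can be
identified `M`-equivariantly, and then `A` and `B` act faithfully on the same finite set by right
multiplication, with the same action of `M`. The induced map from `G₁ ∗_H G₂` to this finite group
has a kernel of finite index meeting `Gᵢ` exactly in `Pᵢ`; as the `Pᵢ` can be chosen inside any
given finite-index subgroup of `Gᵢ`, this is the topological embedding.
-/

open Function

section FiniteAmalgam

universe uA uB

variable {M : Type*} {A : Type uA} {B : Type uB} [Group M] [Group A] [Group B]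
  {u : M →* A} {v : M →* B}

noncomputable def cosetProdEquiv (hu : Injective u) : (A ⧸ u.range) × M ≃ A :=
  Equiv.ofBijective (fun x => x.1.out * u x.2) <| by
    have mk_out_mul (q : A ⧸ u.range) (m : M) : ((q.out * u m : A) : A ⧸ u.range) = q := by
      rw [QuotientGroup.mk_mul_of_mem _ (u.mem_range.2 ⟨m, rfl⟩), QuotientGroup.out_eq']
    refine ⟨?_, fun a => ?_⟩
    · rintro ⟨q, m⟩ ⟨q', m'⟩ h
      obtain rfl : q = q' := by rw [← mk_out_mul q m, ← mk_out_mul q' m']; exact congrArg _ h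
      exact Prod.ext rfl (hu (mul_left_cancel h))
    · obtain ⟨m, hm⟩ : (a : A ⧸ u.range).out⁻¹ * a ∈ u.range :=
        QuotientGroup.eq.mp (QuotientGroup.out_eq' _)
      exact ⟨((a : A ⧸ u.range), m), by simp [hm]⟩

theorem cosetProdEquiv_apply (hu : Injective u) (q : A ⧸ u.range) (m : M) :
    cosetProdEquiv hu (q, m) = q.out * u m := rfl

theorem cosetProdEquiv_mul (hu : Injective u) (q : A ⧸ u.range) (m m₀ : M) :
    cosetProdEquiv hu (q, m) * u m₀ = cosetProdEquiv hu (q, m * m₀) := by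
  simp [cosetProdEquiv_apply, mul_assoc]

def rightMulProdPerm (A Z : Type*) [Group A] : A →* Equiv.Perm (A × Z) where
  toFun a := (Equiv.mulRight a⁻¹).prodCongr (Equiv.refl Z)
  map_one' := by ext <;> simp
  map_mul' a b := by ext <;> simp [mul_assoc]

theorem rightMulProdPerm_injective (A Z : Type*) [Group A] [Nonempty Z] :
    Injective (rightMulProdPerm A Z) := by
  intro a b h
  obtain ⟨z⟩ := ‹Nonempty Z›
  simpa [rightMulProdPerm] using congrArg (fun p : Equiv.Perm (A × Z) => (p (1, z)).1) h

noncomputable def amalgamSwapEquiv (hu : Injective u) (hv : Injective v) :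
    A × (B ⧸ v.range) ≃ B × (A ⧸ u.range) where
  toFun x :=
    let y := (cosetProdEquiv hu).symm x.1
    (cosetProdEquiv hv (x.2, y.2), y.1)
  invFun x :=
    let y := (cosetProdEquiv hv).symm x.1
    (cosetProdEquiv hu (x.2, y.2), y.1)
  left_inv x := by simp
  right_inv x := by simp

theorem amalgamSwapEquiv_apply (hu : Injective u) (hv : Injective v) (q : A ⧸ u.range) (m : M)
    (s : B ⧸ v.range) :
    amalgamSwapEquiv hu hv (cosetProdEquiv hu (q, m), s) = (cosetProdEquiv hv (s, m), q) := by
  simp [amalgamSwapEquiv]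

theorem amalgamSwapEquiv_trans_rightMulProdPerm (hu : Injective u) (hv : Injective v) (m : M) :
    (amalgamSwapEquiv hu hv).trans (rightMulProdPerm B _ (v m)) =
      (rightMulProdPerm A _ (u m)).trans (amalgamSwapEquiv hu hv) := by
  ext ⟨a, s⟩ : 1
  obtain ⟨⟨q, x⟩, rfl⟩ := (cosetProdEquiv hu).surjective a
  simp [rightMulProdPerm, ← map_inv, amalgamSwapEquiv_apply, cosetProdEquiv_mul]

theorem exists_finite_amalgam_of_injective [Finite A] [Finite B] (hu : Injective u) (hv : Injective v) :
    ∃ (F : Type (max uA uB)) (_ : Group F) (_ : Finite F) (α : A →* F) (β : B →* F),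
      Injective α ∧ Injective β ∧ α.comp u = β.comp v := by
  let e := amalgamSwapEquiv hu hv
  refine ⟨_, _, inferInstance, rightMulProdPerm A _,
    (e.symm.permCongrHom.toMonoidHom).comp (rightMulProdPerm B _),
    rightMulProdPerm_injective A _,
    e.symm.permCongrHom.injective.comp (rightMulProdPerm_injective B _), ?_⟩
  ext m : 1
  simp only [MonoidHom.comp_apply, MulEquiv.coe_toMonoidHom, Equiv.permCongrHom_coe,
    Equiv.permCongr_def, Equiv.symm_symm]
  rw [amalgamSwapEquiv_trans_rightMulProdPerm, Equiv.trans_assoc, Equiv.self_trans_symm, Equiv.trans_refl]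

theorem exists_finite_amalgam_of_ker_eq {H : Type*} {Q₁ : Type uA} {Q₂ : Type uB} [Group H] [Group Q₁]
    [Group Q₂] [Finite Q₁] [Finite Q₂] (φ₁ : H →* Q₁) (φ₂ : H →* Q₂) (hker : φ₁.ker = φ₂.ker) :
    ∃ (F : Type (max uA uB)) (_ : Group F) (_ : Finite F) (α : Q₁ →* F) (β : Q₂ →* F),
      Injective α ∧ Injective β ∧ α.comp φ₁ = β.comp φ₂ := by
  obtain ⟨F, _, _, α, β, hα, hβ, hαβ⟩ := exists_finite_amalgam_of_injective
    (v := (QuotientGroup.kerLift φ₂).comp (QuotientGroup.quotientMulEquivOfEq hker).toMonoidHom)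
    (QuotientGroup.kerLift_injective φ₁)
    ((QuotientGroup.kerLift_injective φ₂).comp (QuotientGroup.quotientMulEquivOfEq hker).injective)
  refine ⟨F, _, inferInstance, α, β, hα, hβ, MonoidHom.ext fun h => ?_⟩
  exact DFunLike.congr_fun hαβ (h : H ⧸ φ₁.ker)

end FiniteAmalgam

namespace AmalgamatedProduct

variable {H G₁ G₂ F : Type*} [Group H] [Group G₁] [Group G₂] [Group F]
  {f₁ : H →* G₁} {f₂ : H →* G₂}

def lift (α : G₁ →* F) (β : G₂ →* F) (h : α.comp f₁ = β.comp f₂) :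
    AmalgamatedProduct f₁ f₂ →* F :=
  QuotientGroup.lift _ (Monoid.Coprod.lift α β) <| Subgroup.normalClosure_le_normal <| by
    rintro _ ⟨x, rfl⟩
    simpa [MonoidHom.mem_ker, mul_inv_eq_one] using DFunLike.congr_fun h x

@[simp]
theorem lift_comp_inl (α : G₁ →* F) (β : G₂ →* F) (h : α.comp f₁ = β.comp f₂) :
    (lift α β h).comp (inl f₁ f₂) = α := by
  ext; simp [lift, inl]

@[simp]
theorem lift_comp_inr (α : G₁ →* F) (β : G₂ →* F) (h : α.comp f₁ = β.comp f₂) :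
    (lift α β h).comp (inr f₁ f₂) = β := by
  ext; simp [lift, inr]

theorem exists_finiteIndex_comap_inl_inr_eq (P₁ : Subgroup G₁) (P₂ : Subgroup G₂) [P₁.Normal]
    [P₂.Normal] [P₁.FiniteIndex] [P₂.FiniteIndex] (hP : P₁.comap f₁ = P₂.comap f₂) :
    ∃ L : Subgroup (AmalgamatedProduct f₁ f₂),
      L.FiniteIndex ∧ L.comap (inl f₁ f₂) = P₁ ∧ L.comap (inr f₁ f₂) = P₂ := by
  have hker : ((QuotientGroup.mk' P₁).comp f₁).ker = ((QuotientGroup.mk' P₂).comp f₂).ker := by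
    simpa only [← MonoidHom.comap_ker, QuotientGroup.ker_mk'] using hP
  obtain ⟨F, _, _, α, β, hα, hβ, hαβ⟩ := exists_finite_amalgam_of_ker_eq _ _ hker
  let ψ := lift (α.comp (QuotientGroup.mk' P₁)) (β.comp (QuotientGroup.mk' P₂))
    (by simpa only [MonoidHom.comp_assoc] using hαβ)
  refine ⟨ψ.ker, inferInstance, ?_, ?_⟩
  · rw [MonoidHom.comap_ker, lift_comp_inl, MonoidHom.ker_comp_of_injective _ _ hα,
      QuotientGroup.ker_mk']
  · rw [MonoidHom.comap_ker, lift_comp_inr, MonoidHom.ker_comp_of_injective _ _ hβ,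
      QuotientGroup.ker_mk']

end AmalgamatedProduct

theorem topologicallyEmbeddedVia_of_forall_normal {H G : Type*} [Group H] [Group G] (f : H →* G)
    (h : ∀ N : Subgroup H, N.Normal → N.FiniteIndex →
      ∃ L : Subgroup G, L.FiniteIndex ∧ L.comap f ≤ N) :
    TopologicallyEmbeddedVia f := fun K _ =>
  (h K.normalCore inferInstance inferInstance).imp fun _ hL => ⟨hL.1, hL.2.trans K.normalCore_le⟩

theorem statement2_general {H G₁ G₂ : Type*} [Group H] [Group G₁] [Group G₂]
    (f₁ : H →* G₁) (f₂ : H →* G₂)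
    (hyp : ∀ (N₁ : Subgroup G₁) (N₂ : Subgroup G₂),
      N₁.Normal → N₁.FiniteIndex → N₂.Normal → N₂.FiniteIndex →
      ∃ (P₁ : Subgroup G₁) (P₂ : Subgroup G₂),
        P₁.Normal ∧ P₁.FiniteIndex ∧ P₁ ≤ N₁ ∧
        P₂.Normal ∧ P₂.FiniteIndex ∧ P₂ ≤ N₂ ∧
        P₁.comap f₁ = P₂.comap f₂) :
    TopologicallyEmbeddedVia (AmalgamatedProduct.inl f₁ f₂) ∧
      TopologicallyEmbeddedVia (AmalgamatedProduct.inr f₁ f₂) := by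
  constructor
  · refine topologicallyEmbeddedVia_of_forall_normal _ fun N hN hNf => ?_
    obtain ⟨P₁, P₂, _, _, hPN, _, _, -, hP⟩ := hyp N ⊤ hN hNf inferInstance inferInstance
    obtain ⟨L, hL, hL₁, -⟩ := AmalgamatedProduct.exists_finiteIndex_comap_inl_inr_eq P₁ P₂ hP
    exact ⟨L, hL, hL₁ ▸ hPN⟩
  · refine topologicallyEmbeddedVia_of_forall_normal _ fun N hN hNf => ?_
    obtain ⟨P₁, P₂, _, _, -, _, _, hPN, hP⟩ := hyp ⊤ N inferInstance inferInstance hN hNf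
    obtain ⟨L, hL, -, hL₂⟩ := AmalgamatedProduct.exists_finiteIndex_comap_inl_inr_eq P₁ P₂ hP
    exact ⟨L, hL, hL₂ ▸ hPN⟩

/-- If for each pair of finite-index normal subgroups `N₁ ⊴ G₁`, `N₂ ⊴ G₂` there are
finite-index normal subgroups `Pᵢ ⊴ Gᵢ` with `Pᵢ ≤ Nᵢ` and `P₁ ∩ H = P₂ ∩ H`, then
`G₁` and `G₂` are each topologically embedded in `G₁ ∗_H G₂`. -/
theorem statement2 {H G₁ G₂ : Type*} [Group H] [Group G₁] [Group G₂]
    (f₁ : H →* G₁) (f₂ : H →* G₂)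
    (hf₁ : Function.Injective f₁) (hf₂ : Function.Injective f₂)
    (hyp : ∀ (N₁ : Subgroup G₁) (N₂ : Subgroup G₂),
      N₁.Normal → N₁.FiniteIndex → N₂.Normal → N₂.FiniteIndex →
      ∃ (P₁ : Subgroup G₁) (P₂ : Subgroup G₂),
        P₁.Normal ∧ P₁.FiniteIndex ∧ P₁ ≤ N₁ ∧
        P₂.Normal ∧ P₂.FiniteIndex ∧ P₂ ≤ N₂ ∧
        P₁.comap f₁ = P₂.comap f₂) :
    TopologicallyEmbeddedVia (AmalgamatedProduct.inl f₁ f₂) ∧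
      TopologicallyEmbeddedVia (AmalgamatedProduct.inr f₁ f₂) :=
  statement2_general f₁ f₂ hyp
end

section
/- Let φ : H → K be an isomorphism between subgroups H and K of a group G. Assume that for every finite-index normal subgroup N of G there exists a finite-index normal subgroup P of G such that P ≤ N and P ∩ K = φ(P ∩ H). Then G is topologically embedded in the HNN extension G_φ. -/
open MulAction

section EquivariantEquiv

variable {A X Y : Type*} [Group A] [MulAction A X] [MulAction A Y]

theorem MulAction.smul_eq_smul_of_stabilizer_le {x : X} {y : Y}
    (hle : stabilizer A x ≤ stabilizer A y) {g g' : A} (h : g • x = g' • x) :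
    g • y = g' • y := by
  have hx : g'⁻¹ * g ∈ stabilizer A x := by rw [mem_stabilizer_iff, mul_smul, h, inv_smul_smul]
  have hy := hle hx
  rwa [mem_stabilizer_iff, mul_smul, inv_smul_eq_iff] at hy

theorem MulAction.card_eq_card_orbitRel_quotient_mul_index {M : Subgroup A}
    (hX : ∀ x : X, stabilizer A x = M) :
    Nat.card X = Nat.card (orbitRel.Quotient A X) * M.index := by
  have e : X ≃ orbitRel.Quotient A X × (A ⧸ M) := calc
    X ≃ Σ ω : orbitRel.Quotient A X, A ⧸ stabilizer A ω.out :=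
      selfEquivSigmaOrbitsQuotientStabilizer A X
    _ ≃ Σ _ : orbitRel.Quotient A X, A ⧸ M :=
      Equiv.sigmaCongrRight fun ω => Subgroup.quotientEquivOfEq (hX ω.out)
    _ ≃ _ := Equiv.sigmaEquivProd _ _
  rw [Nat.card_congr e, Nat.card_prod, Subgroup.index]

theorem MulAction.exists_smul_out_eq (x : X) :
    ∃ g : A, g • (⟦x⟧ : orbitRel.Quotient A X).out = x :=
  orbitRel_apply.mp ((orbitRel A X).iseqv.symm (Quotient.mk_out (s := orbitRel A X) x))

theorem MulAction.exists_equiv_smul_eq_of_stabilizer_eq [Finite X] [Finite Y]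
    {M : Subgroup A} [M.FiniteIndex] (hcard : Nat.card X = Nat.card Y)
    (hX : ∀ x : X, stabilizer A x = M) (hY : ∀ y : Y, stabilizer A y = M) :
    ∃ e : X ≃ Y, ∀ (g : A) (x : X), e (g • x) = g • e x := by
  obtain ⟨ε⟩ : Nonempty (orbitRel.Quotient A X ≃ orbitRel.Quotient A Y) := by
    refine Finite.card_eq.mp (Nat.eq_of_mul_eq_mul_right
      (Nat.pos_of_ne_zero (Subgroup.FiniteIndex.index_ne_zero (H := M))) ?_)
    rw [← card_eq_card_orbitRel_quotient_mul_index hX,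
      ← card_eq_card_orbitRel_quotient_mul_index hY, hcard]
  choose r hr using exists_smul_out_eq (A := A) (X := X)
  -- `f` sends `r x • ω.out` to `r x • (ε ω).out`; equal stabilizers make this well defined.
  let f : X → Y := fun x => r x • (ε ⟦x⟧).out
  have hstab (x : X) : stabilizer A (⟦x⟧ : orbitRel.Quotient A X).out =
      stabilizer A (ε ⟦x⟧).out := by rw [hX, hY]
  have hf_smul (g : A) (x : X) : f (g • x) = g • f x := by
    have hrx : r (g • x) • (⟦x⟧ : orbitRel.Quotient A X).out =
        (g * r x) • (⟦x⟧ : orbitRel.Quotient A X).out := by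
      have hgx := hr (g • x)
      rw [orbitRel.Quotient.quotient_smul_eq] at hgx
      rw [hgx, mul_smul, hr]
    simp only [f, orbitRel.Quotient.quotient_smul_eq, ← mul_smul]
    exact smul_eq_smul_of_stabilizer_le (hstab x).le hrx
  have hf_inj : Function.Injective f := by
    intro x x' hxx'
    have hω : (⟦x⟧ : orbitRel.Quotient A X) = ⟦x'⟧ := by
      apply ε.injective
      simpa [f] using congrArg (fun y => (⟦y⟧ : orbitRel.Quotient A Y)) hxx'
    rw [← hr x, ← hr x']
    simp only [f, hω] at hxx' ⊢
    exact smul_eq_smul_of_stabilizer_le (hstab x').ge hxx'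
  exact ⟨Equiv.ofBijective f (hf_inj.bijective_of_nat_card_le hcard.ge), hf_smul⟩

end EquivariantEquiv

theorem MulAction.exists_equiv_smul_eq_of_comap_stabilizer_eq {A B X Y : Type*} [Group A]
    [Group B] [MulAction A X] [MulAction B Y] [Finite X] [Finite Y] (ψ : A →* B) {M : Subgroup A}
    [M.FiniteIndex] (hcard : Nat.card X = Nat.card Y) (hX : ∀ x : X, stabilizer A x = M)
    (hY : ∀ y : Y, (stabilizer B y).comap ψ = M) :
    ∃ e : X ≃ Y, ∀ (g : A) (x : X), e (g • x) = ψ g • e x := by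
  let _ := MulAction.compHom Y ψ
  exact exists_equiv_smul_eq_of_stabilizer_eq hcard hX hY

theorem QuotientGroup.stabilizer_eq_of_normal {G : Type*} [Group G] (P : Subgroup G) [P.Normal]
    (x : G ⧸ P) : stabilizer G x = P := by
  induction x using QuotientGroup.induction_on with | H z => ?_
  ext g
  rw [mem_stabilizer_iff, show g • (z : G ⧸ P) = ((g * z : G) : G ⧸ P) from rfl,
    QuotientGroup.eq, mul_inv_rev, mul_assoc, ‹P.Normal›.mem_comm_iff, mul_inv_cancel_right,
    inv_mem_iff]

theorem Subgroup.comap_eq_subgroupOf_of_inf_eq_map {G : Type*} [Group G] {H K P : Subgroup G}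
    (φ : H ≃* K)
    (hPK : P ⊓ K = ((P ⊓ H).subgroupOf H).map (K.subtype.comp φ.toMonoidHom)) :
    P.comap (K.subtype.comp φ.toMonoidHom) = P.subgroupOf H := by
  have hinj : Function.Injective (K.subtype.comp φ.toMonoidHom) :=
    K.subtype_injective.comp φ.injective
  ext h
  rw [mem_comap, ← inf_subgroupOf_right, ← mem_map_iff_mem hinj, ← hPK]
  simp [(φ h).2]

theorem HNNExtension.comap_of_ker_lift {G H : Type*} [Group G] [Group H] {A B : Subgroup G}
    {φ : A ≃* B} (f : G →* H) (x : H) (hx : ∀ a : A, x * f ↑a = f (φ a : G) * x) :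
    (lift f x hx).ker.comap of = f.ker := by
  rw [MonoidHom.comap_ker, show (lift f x hx).comp of = f from MonoidHom.ext (lift_of f x hx)]

/-- Let `φ : H → K` be an isomorphism between subgroups of `G`.  If for every
finite-index normal subgroup `N` of `G` there is a finite-index normal subgroup `P ≤ N`
with `P ∩ K = φ(P ∩ H)`, then `G` is topologically embedded in the HNN extension `G_φ`. -/
theorem statement5 {G : Type*} [Group G] (H K : Subgroup G) (φ : H ≃* K)
    (hyp : ∀ N : Subgroup G, N.Normal → N.FiniteIndex →
      ∃ P : Subgroup G, P.Normal ∧ P.FiniteIndex ∧ P ≤ N ∧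
        P ⊓ K = ((P ⊓ H).subgroupOf H).map (K.subtype.comp φ.toMonoidHom)) :
    TopologicallyEmbeddedVia (HNNExtension.of : G →* HNNExtension G H K φ) := by
  intro L _
  obtain ⟨P, _, _, hPL, hPK⟩ := hyp L.normalCore L.normalCore_normal inferInstance
  have hstab := QuotientGroup.stabilizer_eq_of_normal P
  obtain ⟨σ, hσ⟩ := exists_equiv_smul_eq_of_comap_stabilizer_eq (X := G ⧸ P)
    (K.subtype.comp φ.toMonoidHom) rfl (fun x => congrArg (·.subgroupOf H) (hstab x))
    (fun y => by rw [hstab, Subgroup.comap_eq_subgroupOf_of_inf_eq_map φ hPK])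
  let f := MulAction.toPermHom G (G ⧸ P)
  refine ⟨(HNNExtension.lift f σ fun h => Equiv.ext (hσ h)).ker, inferInstance, ?_⟩
  rw [HNNExtension.comap_of_ker_lift, ← Subgroup.normalCore_eq_ker]
  exact P.normalCore_le.trans (hPL.trans L.normalCore_le)
end

section
/- Let G be a right-angled Artin group with finite generating set X and relator set Σ ⊆ X × X. Then for every subset X' ⊆ X, the subgroup ⟨X'⟩ generated by X' is topologically embedded in G. -/
open scoped commutatorElement in
/-- The relators of the right-angled Artin group on `X` determined by `S ⊆ X × X`:
the commutators `[x, y]` for `(x, y) ∈ S`.  The right-angled Artin group itself is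
`PresentedGroup (raagRels S)`. -/
def raagRels {X : Type*} (S : Set (X × X)) : Set (FreeGroup X) :=
  (fun p : X × X => ⁅FreeGroup.of p.1, FreeGroup.of p.2⁆) '' S

/-!
Sending the generators outside `X'` to `1` and fixing those in `X'` respects the commuting
relations, so it defines a retraction `r` of the right-angled Artin group onto `⟨X'⟩`.
For a finite-index subgroup `K` of `⟨X'⟩`, the preimage `r⁻¹(K)` has finite index in the whole
group (as `r` is onto) and meets `⟨X'⟩` exactly in `K` (as `r` fixes `⟨X'⟩`).
-/

theorem TopologicallyEmbedded.of_retraction {G : Type*} [Group G] {H : Subgroup G}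
    (r : G →* H) (hr : ∀ h : H, r h = h) : TopologicallyEmbedded H := by
  intro K _ hK
  have hsurj : Function.Surjective r := fun h => ⟨h, hr h⟩
  refine ⟨(K.subgroupOf H).comap r, ⟨?_⟩, ?_⟩
  · rw [Subgroup.index_comap_of_surjective _ hsurj]
    exact hK.1
  · rintro g ⟨hgL, hgH⟩
    have hrg : r g ∈ K.subgroupOf H := hgL
    rwa [← Subtype.coe_mk g hgH, hr, Subgroup.mem_subgroupOf] at hrg

section RAAG

open scoped commutatorElement

variable {X : Type*} {S : Set (X × X)}

theorem PresentedGroup.commute_of_of_raagRels {a b : X} (hab : (a, b) ∈ S) :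
    Commute (PresentedGroup.of a : PresentedGroup (raagRels S)) (PresentedGroup.of b) := by
  have : PresentedGroup.mk (raagRels S) ⁅FreeGroup.of a, FreeGroup.of b⁆ = 1 :=
    (QuotientGroup.eq_one_iff _).mpr (Subgroup.subset_normalClosure ⟨(a, b), hab, rfl⟩)
  rwa [map_commutatorElement, commutatorElement_eq_one_iff_commute] at this

variable {G : Type*} [Group G]

def raagLift (f : X → G) (hf : ∀ p ∈ S, Commute (f p.1) (f p.2)) :
    PresentedGroup (raagRels S) →* G :=
  PresentedGroup.toGroup (f := f) <| by
    rintro _ ⟨p, hp, rfl⟩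
    simp only [map_commutatorElement, FreeGroup.lift_apply_of]
    exact (hf p hp).commutator_eq

theorem raagLift_of (f : X → G) (hf : ∀ p ∈ S, Commute (f p.1) (f p.2)) (x : X) :
    raagLift f hf (PresentedGroup.of x) = f x :=
  PresentedGroup.toGroup.of _

variable (S) in
abbrev raagSpecialSubgroup (X' : Set X) : Subgroup (PresentedGroup (raagRels S)) :=
  Subgroup.closure ((fun x : X => (PresentedGroup.of x : PresentedGroup (raagRels S))) '' X')

open scoped Classical in
noncomputable def raagRetraction (X' : Set X) :
    PresentedGroup (raagRels S) →* raagSpecialSubgroup S X' :=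
  raagLift
    (fun x => if hx : x ∈ X' then ⟨PresentedGroup.of x, Subgroup.subset_closure ⟨x, hx, rfl⟩⟩
      else 1)
    (by
      rintro ⟨a, b⟩ hab
      split_ifs
      · exact Subtype.ext (PresentedGroup.commute_of_of_raagRels hab)
      all_goals simp)

theorem raagRetraction_apply_coe (X' : Set X) (h : raagSpecialSubgroup S X') :
    raagRetraction X' h = h := by
  obtain ⟨g, hg⟩ := h
  suffices (raagRetraction X' g : PresentedGroup (raagRels S)) = g from Subtype.ext this
  induction hg using Subgroup.closure_induction with
  | mem _ hx =>
    obtain ⟨x, hx, rfl⟩ := hx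
    simp [raagRetraction, raagLift_of, hx]
  | one => simp
  | mul _ _ _ _ ha hb => simp [ha, hb]
  | inv _ _ ha => simp [ha]

end RAAG

theorem statement6_general {X : Type*} (S : Set (X × X)) (X' : Set X) :
    TopologicallyEmbedded (Subgroup.closure
      ((fun x : X => (PresentedGroup.of x : PresentedGroup (raagRels S))) '' X')) :=
  TopologicallyEmbedded.of_retraction (raagRetraction X') (raagRetraction_apply_coe X')

/-- In a right-angled Artin group with finite generating set `X` and relator set
`S ⊆ X × X`, the subgroup generated by any subset `X' ⊆ X` is topologically embedded. -/
theorem statement6 {X : Type*} [Finite X] (S : Set (X × X)) (X' : Set X) :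
    TopologicallyEmbedded (Subgroup.closure
      ((fun x : X => (PresentedGroup.of x : PresentedGroup (raagRels S))) '' X')) :=
  statement6_general S X'
end

section
/- Let G be a finitely generated group, N a finite-index normal subgroup of G, and φ : G → G a homomorphism. Then N contains a subgroup M that is normal and of finite index in G and satisfies φ(M) ≤ M. -/
/-!
Let `M` be the intersection of the kernels of all homomorphisms from `G` to the finite group
`Sym(G ⧸ N)`. As `G` is finitely generated there are only finitely many such homomorphisms, so
`M` has finite index. The action of `G` on `G ⧸ N` is one of them, with kernel the normal core
of `N`, so `M ≤ N`. Finally `f ∘ φ` is again such a homomorphism for each `f`, so `φ(M) ≤ M`.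
-/

theorem MonoidHom.finite_of_fg (G F : Type*) [Group G] [Group.FG G] [Monoid F] [Finite F] :
    Finite (G →* F) := by
  obtain ⟨S, hS⟩ := Group.FG.out (G := G)
  refine Finite.of_injective (fun f : G →* F => fun s : S => f s) fun f g hfg => ?_
  exact MonoidHom.eq_of_eqOn_dense hS fun x hx => congrFun hfg ⟨x, hx⟩

namespace Subgroup

variable (G F : Type*) [Group G] [Group F]

def iInfKer : Subgroup G :=
  ⨅ f : G →* F, f.ker

variable {G F}

theorem mem_iInfKer {x : G} : x ∈ iInfKer G F ↔ ∀ f : G →* F, f x = 1 := by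
  simp only [iInfKer, mem_iInf, MonoidHom.mem_ker]

theorem iInfKer_le_ker (f : G →* F) : iInfKer G F ≤ f.ker :=
  iInf_le _ f

instance iInfKer_normal : (iInfKer G F).Normal :=
  normal_iInf_normal fun f => f.normal_ker

instance iInfKer_finiteIndex [Group.FG G] [Finite F] : (iInfKer G F).FiniteIndex :=
  have := MonoidHom.finite_of_fg G F
  finiteIndex_iInf fun f => finiteIndex_ker f

theorem map_mem_iInfKer (φ : G →* G) {x : G} (hx : x ∈ iInfKer G F) : φ x ∈ iInfKer G F :=
  mem_iInfKer.2 fun f => mem_iInfKer.1 hx (f.comp φ)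

theorem iInfKer_perm_quotient_le (H : Subgroup G) : iInfKer G (Equiv.Perm (G ⧸ H)) ≤ H := by
  calc iInfKer G (Equiv.Perm (G ⧸ H)) ≤ (MulAction.toPermHom G (G ⧸ H)).ker := iInfKer_le_ker _
    _ = H.normalCore := (normalCore_eq_ker H).symm
    _ ≤ H := normalCore_le H

end Subgroup

open Subgroup in
theorem statement9_general {G : Type*} [Group G] (hfg : Group.FG G) (N : Subgroup G)
    (hNf : N.FiniteIndex) (φ : G →* G) :
    ∃ M : Subgroup G, M ≤ N ∧ M.Normal ∧ M.FiniteIndex ∧ ∀ x ∈ M, φ x ∈ M :=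
  ⟨iInfKer G (Equiv.Perm (G ⧸ N)), iInfKer_perm_quotient_le N, inferInstance,
    inferInstance, fun _ => map_mem_iInfKer φ⟩

/-- If `G` is finitely generated, `N` a finite-index normal subgroup of `G` and
`φ : G → G` a homomorphism, then `N` contains a finite-index normal subgroup `M` of `G`
with `φ(M) ≤ M`. -/
theorem statement9 {G : Type*} [Group G] (hfg : Group.FG G) (N : Subgroup G)
    (hNn : N.Normal) (hNf : N.FiniteIndex) (φ : G →* G) :
    ∃ M : Subgroup G, M ≤ N ∧ M.Normal ∧ M.FiniteIndex ∧ ∀ x ∈ M, φ x ∈ M :=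
  statement9_general hfg N hNf φ
end

section
/- If A is a finitely generated abelian group, then every homomorphism φ : A → A has property 𝔓. -/
/-!
Quotienting by the generalized kernel `⨆ n, ker φⁿ` makes `φ` injective; if `g` lies in it, the
orbit of `g` is finite and residual finiteness of `A` suffices. For injective `φ`, a torsion `g`
has its orbit in the finite torsion subgroup `T`, which meets `|T| • A` trivially. Otherwise pass
to the free quotient `A / T`: the adjugate gives `ψ` with `ψ ∘ φ = a • id`, `a = det φ ≠ 0`, so for
`k` coprime to `a`, `φ x ∈ k • A` forces `x ∈ k • A`; choosing `k` not dividing a nonzero coordinate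
of `g` keeps the whole orbit out of `k • A`.
-/

/-- An endomorphism `φ` of `G` has property 𝔓 if for every `g ∈ G` there is a
finite-index normal subgroup `N` such that for all `i ≥ 0`, `φ^i(g) ∈ N ↔ φ^i(g) = 1`. -/
def PropertyP {G : Type*} [Group G] (φ : G →* G) : Prop :=
  ∀ g : G, ∃ N : Subgroup G, N.Normal ∧ N.FiniteIndex ∧
    ∀ i : ℕ, ((⇑φ)^[i] g ∈ N ↔ (⇑φ)^[i] g = 1)

open Function

theorem AddGroup.exists_finiteIndex_forall_mem_eq_zero {G : Type*} [AddGroup G]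
    [AddGroup.ResiduallyFinite G] {S : Set G} (hS : S.Finite) :
    ∃ H : AddSubgroup G, H.FiniteIndex ∧ ∀ x ∈ S, x ∈ H → x = 0 := by
  have : Finite {x // x ∈ S ∧ x ≠ 0} := (hS.subset fun _ hx ↦ hx.1).to_subtype
  choose H hH hxH using fun x : {x // x ∈ S ∧ x ≠ 0} ↦
    AddGroup.residuallyFinite_iff_exists_finiteIndex.mp ‹_› x.1 x.2.2
  refine ⟨⨅ x, H x, AddSubgroup.finiteIndex_iInf hH, fun x hx hxH' ↦ ?_⟩
  by_contra h0
  exact hxH ⟨x, hx, h0⟩ (AddSubgroup.mem_iInf.mp hxH' _)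

theorem LinearMap.exists_comp_eq_smul_id_of_injective {R F : Type*} [CommRing R] [IsDomain R]
    [AddCommGroup F] [Module R F] [Module.Free R F] [Module.Finite R F] {f : F →ₗ[R] F}
    (hf : Injective f) : ∃ a ≠ (0 : R), ∃ g : F →ₗ[R] F, g ∘ₗ f = a • LinearMap.id := by
  classical
  let b := Module.Free.chooseBasis R F
  let A := LinearMap.toMatrix b b f
  refine ⟨A.det, fun hA ↦ ?_, Matrix.toLin b b A.adjugate, ?_⟩
  · obtain ⟨w, hw, hAw⟩ := Matrix.exists_mulVec_eq_zero_iff.mpr hA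
    have hrepr : ⇑(b.repr (b.equivFun.symm w)) = w := b.equivFun.apply_symm_apply w
    have : b.repr (f (b.equivFun.symm w)) = 0 := by
      ext j
      rw [← LinearMap.toMatrix_mulVec_repr b b, hrepr, hAw]
      rfl
    rw [LinearEquiv.map_eq_zero_iff, ← map_zero f, hf.eq_iff, LinearEquiv.map_eq_zero_iff] at this
    exact hw this
  · rw [← Matrix.toLin_toMatrix b b f, ← Matrix.toLin_mul, Matrix.adjugate_mul, map_smul,
      Matrix.toLin_one]

theorem Submodule.mapQ_injective_of_comap_le {R M : Type*} [Ring R] [AddCommGroup M] [Module R M]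
    {K : Submodule R M} {f : M →ₗ[R] M} (hK : K ≤ K.comap f) (h : K.comap f ≤ K) :
    Injective (K.mapQ K f hK) := by
  rw [← LinearMap.ker_eq_bot, Submodule.ker_mapQ, ← le_bot_iff, ← K.mkQ_map_self]
  exact Submodule.map_mono h

section IntModule

variable {M : Type*} [AddCommGroup M]

theorem mem_range_zsmul_of_iterate_mem {f g : M →ₗ[ℤ] M} {a k : ℤ}
    (hgf : g ∘ₗ f = a • LinearMap.id) (hak : IsCoprime a k) {x : M} {i : ℕ}
    (hx : f^[i] x ∈ (zsmulAddGroupHom k : M →+ M).range) :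
    x ∈ (zsmulAddGroupHom k : M →+ M).range := by
  obtain ⟨u, w, huw⟩ := hak
  have step : ∀ y, f y ∈ (zsmulAddGroupHom k : M →+ M).range →
      y ∈ (zsmulAddGroupHom k : M →+ M).range := by
    rintro y ⟨z, hz⟩
    refine ⟨u • g z + w • y, ?_⟩
    calc k • (u • g z + w • y) = u • g (k • z) + (w * k) • y := by rw [map_zsmul]; module
      _ = (u * a + w * k) • y := by
          rw [show k • z = f y from hz, ← LinearMap.comp_apply, hgf]
          simp only [LinearMap.smul_apply, LinearMap.id_apply]
          module
      _ = y := by rw [huw, one_smul]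
  induction i generalizing x with
  | zero => exact hx
  | succ i ih => exact step x (ih hx)

theorem Submodule.torsion_le_comap (f : M →ₗ[ℤ] M) :
    Submodule.torsion ℤ M ≤ (Submodule.torsion ℤ M).comap f := by
  rintro x ⟨a, ha⟩
  exact ⟨a, by rw [Submonoid.smul_def, ← f.map_smul, ← Submonoid.smul_def, ha, map_zero]⟩

theorem Submodule.comap_torsion_le {f : M →ₗ[ℤ] M} (hf : Injective f) :
    (Submodule.torsion ℤ M).comap f ≤ Submodule.torsion ℤ M := by
  rintro x ⟨a, ha⟩
  exact ⟨a, hf (by rw [Submonoid.smul_def, f.map_smul, ← Submonoid.smul_def, ha, map_zero])⟩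

theorem Submodule.exists_finiteIndex_forall_iterate_notMem_of_mapQ {K : Submodule ℤ M}
    {f : M →ₗ[ℤ] M} (hK : K ≤ K.comap f) {v : M}
    (h : ∃ N : AddSubgroup (M ⧸ K), N.FiniteIndex ∧ ∀ i, (K.mapQ K f hK)^[i] (K.mkQ v) ∉ N) :
    ∃ N : AddSubgroup M, N.FiniteIndex ∧ ∀ i, f^[i] v ∉ N := by
  obtain ⟨N, hN, hv⟩ := h
  have hsemi : Semiconj K.mkQ f (K.mapQ K f hK) := fun _ ↦ rfl
  refine ⟨N.comap K.mkQ.toAddMonoidHom, ⟨?_⟩, fun i hi ↦ hv i ?_⟩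
  · rw [AddSubgroup.index_comap_of_surjective _ K.mkQ_surjective]
    exact hN.index_ne_zero
  · rwa [← hsemi.iterate_right i v]

variable [Module.Finite ℤ M]

theorem finiteIndex_range_zsmulAddGroupHom {k : ℤ} (hk : k ≠ 0) :
    (zsmulAddGroupHom k : M →+ M).range.FiniteIndex := by
  have : AddGroup.FG M := Module.Finite.iff_addGroup_fg.mp ‹_›
  have : Module.Finite ℤ (M ⧸ (zsmulAddGroupHom k : M →+ M).range) :=
    Module.Finite.iff_addGroup_fg.mpr (QuotientAddGroup.fg _)
  have : Finite (M ⧸ (zsmulAddGroupHom k : M →+ M).range) := by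
    refine Module.finite_of_fg_torsion _ fun x ↦ ?_
    induction x using QuotientAddGroup.induction_on with
    | H y =>
      exact ⟨⟨k, mem_nonZeroDivisors_of_ne_zero hk⟩, (QuotientAddGroup.eq_zero_iff _).mpr ⟨y, rfl⟩⟩
  exact AddSubgroup.finiteIndex_of_finite_quotient

theorem exists_finiteIndex_forall_mem_torsion_eq_zero :
    ∃ N : AddSubgroup M, N.FiniteIndex ∧ ∀ x ∈ N, x ∈ Submodule.torsion ℤ M → x = 0 := by
  have : Finite (Submodule.torsion ℤ M) :=
    Module.finite_of_fg_torsion _ Submodule.torsion_isTorsion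
  have he : (Nat.card (Submodule.torsion ℤ M) : ℤ) ≠ 0 := Nat.cast_ne_zero.mpr Nat.card_pos.ne'
  refine ⟨_, finiteIndex_range_zsmulAddGroupHom he, ?_⟩
  rintro _ ⟨y, rfl⟩ hx
  obtain ⟨a, ha⟩ := (Submodule.mem_torsion_iff _).mp hx
  have hy : y ∈ Submodule.torsion ℤ M := (Submodule.mem_torsion_iff _).mpr
    ⟨⟨a * _, mul_mem a.2 (mem_nonZeroDivisors_of_ne_zero he)⟩,
      by simpa [Submonoid.smul_def, mul_smul] using ha⟩
  have := congrArg Subtype.val (card_nsmul_eq_zero' (x := (⟨y, hy⟩ : Submodule.torsion ℤ M)))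
  simpa [natCast_zsmul] using this

theorem Module.Free.exists_finiteIndex_forall_iterate_notMem [Module.Free ℤ M] {f : M →ₗ[ℤ] M}
    (hf : Function.Injective f) {v : M} (hv : v ≠ 0) :
    ∃ N : AddSubgroup M, N.FiniteIndex ∧ ∀ i, f^[i] v ∉ N := by
  obtain ⟨a, ha, g, hgf⟩ := f.exists_comp_eq_smul_id_of_injective hf
  let b := Module.Free.chooseBasis ℤ M
  obtain ⟨j, hj⟩ : ∃ j, b.repr v j ≠ 0 :=
    Finsupp.ne_iff.mp ((LinearEquiv.map_ne_zero_iff b.repr).mpr hv)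
  set c := b.repr v j
  -- any `k` coprime to `a` with `k ∤ c` would do
  set k := (a * c) ^ 2 + 1
  have hk : k ≠ 0 := by positivity
  have hak : IsCoprime a k := ⟨-(a * c ^ 2), 1, by ring⟩
  refine ⟨_, finiteIndex_range_zsmulAddGroupHom hk, fun i hi ↦ ?_⟩
  obtain ⟨y, hy⟩ := mem_range_zsmul_of_iterate_mem hgf hak hi
  have hkc : k ∣ c := ⟨b.repr y j, by simp [c, ← hy]⟩
  have := Int.le_of_dvd (abs_pos.mpr hj) ((dvd_abs _ _).mpr hkc)
  have : 0 < a ^ 2 := by positivity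
  nlinarith [sq_abs c, abs_pos.mpr hj]

theorem exists_finiteIndex_forall_iterate_notMem {f : M →ₗ[ℤ] M} (hf : Injective f) {v : M}
    (hv : v ≠ 0) : ∃ N : AddSubgroup M, N.FiniteIndex ∧ ∀ i, f^[i] v ∉ N := by
  set T := Submodule.torsion ℤ M
  by_cases hvT : v ∈ T
  · obtain ⟨N, hN, hNT⟩ := exists_finiteIndex_forall_mem_torsion_eq_zero (M := M)
    have hmaps : Set.MapsTo f T T := fun _ hx ↦ Submodule.torsion_le_comap f hx
    refine ⟨N, hN, fun i hi ↦ (hf.iterate i).ne hv ?_⟩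
    rw [iterate_map_zero]
    exact hNT _ hi (hmaps.iterate i hvT)
  · refine Submodule.exists_finiteIndex_forall_iterate_notMem_of_mapQ
      (Submodule.torsion_le_comap f) (Module.Free.exists_finiteIndex_forall_iterate_notMem
        (Submodule.mapQ_injective_of_comap_le _ (Submodule.comap_torsion_le hf)) ?_)
    rwa [ne_eq, Submodule.mkQ_apply, Submodule.Quotient.mk_eq_zero]

instance Module.Finite.addGroupResiduallyFinite : AddGroup.ResiduallyFinite M := by
  refine AddGroup.residuallyFinite_iff_exists_finiteIndex.mpr fun v hv ↦ ?_
  obtain ⟨N, hN, hvN⟩ :=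
    exists_finiteIndex_forall_iterate_notMem (f := LinearMap.id) injective_id hv
  exact ⟨N, hN, hvN 0⟩

theorem exists_finiteIndex_forall_iterate_mem_eq_zero (f : M →ₗ[ℤ] M) (v : M) :
    ∃ N : AddSubgroup M, N.FiniteIndex ∧ ∀ i, f^[i] v ∈ N → f^[i] v = 0 := by
  have hmemK : ∀ x, x ∈ ⨆ m, LinearMap.ker (f ^ m) ↔ ∃ m, f^[m] x = 0 := fun x ↦ by
    rw [Submodule.mem_iSup_of_directed (fun m ↦ LinearMap.ker (f ^ m))
      f.iterateKer.monotone.directed_le]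
    simp [Module.End.pow_apply]
  set K := ⨆ m, LinearMap.ker (f ^ m)
  have hK : K.comap f = K := by
    ext x
    simp only [Submodule.mem_comap, hmemK, ← iterate_succ_apply]
    exact ⟨fun ⟨m, hm⟩ ↦ ⟨m + 1, hm⟩, fun ⟨m, hm⟩ ↦ ⟨m, by rw [iterate_succ_apply', hm, map_zero]⟩⟩
  by_cases hvK : v ∈ K
  · obtain ⟨m, hm⟩ := (hmemK v).mp hvK
    have horbit : (Set.range fun i ↦ f^[i] v) ⊆ (fun i ↦ f^[i] v) '' Set.Iic m := by
      rintro _ ⟨i, rfl⟩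
      rcases le_total i m with him | hmi
      · exact ⟨i, him, rfl⟩
      · refine ⟨m, Set.mem_Iic.mpr le_rfl, ?_⟩
        change f^[m] v = f^[i] v
        rw [hm, ← Nat.sub_add_cancel hmi, iterate_add_apply, hm, iterate_map_zero]
    obtain ⟨N, hN, hNS⟩ :=
      AddGroup.exists_finiteIndex_forall_mem_eq_zero (((Set.finite_Iic m).image _).subset horbit)
    exact ⟨N, hN, fun i ↦ hNS _ ⟨i, rfl⟩⟩
  · obtain ⟨N, hN, hvN⟩ := Submodule.exists_finiteIndex_forall_iterate_notMem_of_mapQ hK.ge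
      (exists_finiteIndex_forall_iterate_notMem (Submodule.mapQ_injective_of_comap_le _ hK.le)
        (by rwa [ne_eq, Submodule.mkQ_apply, Submodule.Quotient.mk_eq_zero]))
    exact ⟨N, hN, fun i hi ↦ (hvN i hi).elim⟩

end IntModule

/-- Every endomorphism of a finitely generated abelian group has property 𝔓. -/
theorem statement15 {A : Type*} [CommGroup A] (hfg : Group.FG A) (φ : A →* A) :
    PropertyP φ := by
  intro g
  have : Module.Finite ℤ (Additive A) :=
    Module.Finite.iff_addGroup_fg.mpr (GroupFG.iff_add_fg.mp hfg)
  obtain ⟨N, hN, hφN⟩ :=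
    exists_finiteIndex_forall_iterate_mem_eq_zero φ.toAdditive.toIntLinearMap (Additive.ofMul g)
  exact ⟨AddSubgroup.toSubgroup' N, inferInstance, ⟨hN.index_ne_zero⟩,
    fun i ↦ ⟨hφN i, fun h ↦ h ▸ one_mem _⟩⟩
end
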